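/- arXiv:1601.03170 — 5 statements merged into one kernel-verified Lean document; each statement's English description precedes it below -/
import Mathlib

section
/- Dedekind's theorem: For a finite abelian group G with independent commuting variables x_g for g in G, the group determinant Θ(G) = det(x_{gh^{-1}})_{g,h ∈ G} factors as the product over all characters χ of G of the linear forms ∑_{g ∈ G} χ(g) x_g. -/
/-!
The rows `(χ g)_g` of the character table are left eigenvectors of the group matrix
`(x_{g h⁻¹})_{g,h}`, with eigenvalues the linear forms `∑_g χ(g) x_g`: substituting `g = k h⁻¹`
gives `∑_k χ(k) x_{k h⁻¹} = χ(h) ∑_g χ(g) x_g`. With enough roots of unity there are `|G|`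
characters, and by Dedekind's independence of characters the character table is invertible
over the base field, so it conjugates the group matrix to the diagonal matrix of these forms.
-/

open MvPolynomial Matrix

noncomputable def groupMatrix (G R : Type*) [Group G] [CommSemiring R] :
    Matrix G G (MvPolynomial G R) :=
  of fun g h => X (g * h⁻¹)

def characterTable {ι G R : Type*} [MulOneClass G] [MulOneClass R] (χ : ι → G →* R) :
    Matrix ι G R :=
  of fun i g => χ i g

section Eigenvectors

variable {G R : Type*} [Group G] [Fintype G] [CommSemiring R]

theorem sum_C_mul_groupMatrix (ψ : G →* R) (h : G) :
    ∑ k, C (ψ k) * groupMatrix G R k h = C (ψ h) * ∑ g, ψ g • X g := by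
  rw [Finset.mul_sum]
  refine (Fintype.sum_equiv (Equiv.mulRight h) _ _ fun g => ?_).symm
  simp only [groupMatrix, of_apply, Equiv.coe_mulRight, mul_inv_cancel_right, map_mul,
    smul_eq_C_mul]
  ring

theorem characterTable_mul_groupMatrix {ι : Type*} [Fintype ι] [DecidableEq ι]
    (χ : ι → G →* R) :
    (characterTable χ).map (C (σ := G)) * groupMatrix G R =
      diagonal (fun i => ∑ g, χ i g • X (R := R) g) * (characterTable χ).map (C (σ := G)) := by
  refine Matrix.ext fun i h => ?_
  rw [mul_apply, diagonal_mul]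
  exact (sum_C_mul_groupMatrix (χ i) h).trans (mul_comm _ _)

end Eigenvectors

theorem det_eq_det_of_mul_eq_mul {n R : Type*} [Fintype n] [DecidableEq n] [CommRing R]
    {P M D : Matrix n n R} (hP : IsUnit P.det) (h : P * M = D * P) : M.det = D.det :=
  hP.mul_left_cancel (by rw [← det_mul, h, det_mul, mul_comm])

theorem det_characterTable_ne_zero {G K : Type*} [Monoid G] [Fintype G] [DecidableEq G]
    [Field K] (χ : G → G →* K) (hχ : Function.Injective χ) :
    (characterTable χ).det ≠ 0 :=
  (isUnit_iff_isUnit_det _).mp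
    (linearIndependent_rows_iff_isUnit.mp ((linearIndependent_monoidHom G K).comp χ hχ))
    |>.ne_zero

theorem det_groupMatrix {G K : Type*} [CommGroup G] [Fintype G] [DecidableEq G] [Field K]
    [HasEnoughRootsOfUnity K (Monoid.exponent G)] [Fintype (G →* Kˣ)] :
    (groupMatrix G K).det = ∏ χ : G →* Kˣ, ∑ g, (χ g : K) • X g := by
  obtain ⟨σ⟩ := CommGroup.monoidHom_mulEquiv_of_hasEnoughRootsOfUnity G K
  let χ : G → G →* K := fun g => (Units.coeHom K).comp (σ.symm g)
  have hχ : Function.Injective χ := fun g g' h =>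
    σ.symm.injective (MonoidHom.ext fun x => Units.ext (DFunLike.congr_fun h x))
  have hP : IsUnit ((characterTable χ).map (C (σ := G))).det := by
    rw [← RingHom.mapMatrix_apply, ← RingHom.map_det]
    exact (isUnit_iff_ne_zero.mpr (det_characterTable_ne_zero χ hχ)).map C
  rw [det_eq_det_of_mul_eq_mul hP (characterTable_mul_groupMatrix χ), det_diagonal]
  exact σ.symm.toEquiv.prod_comp fun χ => ∑ g, (χ g : K) • X g

/-- Dedekind's theorem: the group determinant of a finite abelian group factors
into linear forms indexed by the characters of the group. -/
theorem dedekind_theorem (G : Type*) [CommGroup G] [Fintype G] [DecidableEq G]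
    [Fintype (G →* ℂˣ)] :
    Matrix.det (Matrix.of fun g h : G => (MvPolynomial.X (g * h⁻¹) : MvPolynomial G ℂ)) =
      ∏ χ : G →* ℂˣ, ∑ g : G, ((χ g : ℂ)) • MvPolynomial.X g := by
  have : NeZero (Monoid.exponent G : ℂ) := ⟨by exact_mod_cast Monoid.exponent_ne_zero_of_finite⟩
  exact det_groupMatrix
end

section
/- Let G be a finite abelian group and H a subgroup. Then the product over all characters χ of G trivial on H of the elements ∑_{g ∈ G} χ(g) x_g g in the group algebra ℂ[x_g][G] is supported on H; that is, there exist homogeneous polynomials A_h ∈ ℂ[x_g] of degree [G:H] for each h ∈ H such that ∏_{χ ∈ Ĝ_H} ∑_{g ∈ G} χ(g) x_g g = ∑_{h ∈ H} A_h h. -/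
/-!
Let `θ = ∑ g, x_g g` and let `twist ψ` be the algebra automorphism `g ↦ ψ(g) g` of `R[G]`, so the
factors of the product are the `twist χ θ`. As `twist ψ ∘ twist χ = twist (ψ χ)` and `χ ↦ ψ χ`
permutes `Ĝ_H` for `ψ ∈ Ĝ_H`, the product `P` is fixed by every such `twist ψ`, i.e.
`ψ(g) P_g = P_g`. For `g ∉ H` some `ψ ∈ Ĝ_H` has `ψ(g) ≠ 1`, hence `P_g = 0`. The coefficients of
each factor are linear forms, and "all coefficients homogeneous of degree `n`" is a grading of
`R[G]`, so the coefficients of `P` are homogeneous of degree `|Ĝ_H| = [G : H]`.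
-/

open MvPolynomial

namespace MonoidAlgebra

section Twist

variable {k R G : Type*} [CommSemiring k] [CommSemiring R] [Algebra k R] [CommMonoid G]

noncomputable def twist (ψ : G →* kˣ) : MonoidAlgebra R G →ₐ[R] MonoidAlgebra R G :=
  lift R (MonoidAlgebra R G) G
    (of R G * (algebraMap k (MonoidAlgebra R G) : k →* _).comp ((Units.coeHom k).comp ψ))

@[simp]
theorem twist_single (ψ : G →* kˣ) (g : G) (r : R) :
    twist ψ (single g r) = single g (ψ g • r) := by
  simp [twist, Algebra.algebraMap_eq_smul_one, Units.smul_def]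

theorem coeff_twist (ψ : G →* kˣ) (x : MonoidAlgebra R G) (g : G) :
    (twist ψ x).coeff g = ψ g • x.coeff g := by
  classical
  induction x using induction_linear with
  | zero => simp
  | add x y hx hy => simp [hx, hy]
  | single a r => by_cases h : a = g <;> simp [h]

theorem twist_twist (ψ χ : G →* kˣ) (x : MonoidAlgebra R G) :
    twist ψ (twist χ x) = twist (ψ * χ) x := by
  ext g
  simp only [coeff_twist, MonoidHom.mul_apply, mul_smul]

end Twist

theorem coeff_eq_zero_of_twist_eq {k R G : Type*} [CommRing k] [IsDomain k] [CommRing R]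
    [Algebra k R] [Module.IsTorsionFree k R] [CommMonoid G] {ψ : G →* kˣ}
    {x : MonoidAlgebra R G} (hx : twist ψ x = x) {g : G} (hg : ψ g ≠ 1) : x.coeff g = 0 := by
  have : ((ψ g : k) - 1) • x.coeff g = 0 := by
    rw [sub_smul, one_smul, ← Units.smul_def, ← coeff_twist, hx, sub_self]
  exact (smul_eq_zero.mp this).resolve_left (sub_ne_zero.mpr (Units.val_eq_one.not.mpr hg))

section CoeffGrading

variable {ι k R G : Type*} [CommSemiring k] [Semiring R] [Module k R]

def coeffGrading (𝒜 : ι → Submodule k R) (i : ι) : Submodule k (MonoidAlgebra R G) where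
  carrier := {x | ∀ g, x.coeff g ∈ 𝒜 i}
  add_mem' hx hy g := add_mem (hx g) (hy g)
  zero_mem' _ := zero_mem _
  smul_mem' c _ hx g := Submodule.smul_mem _ c (hx g)

variable {𝒜 : ι → Submodule k R} {i : ι}

theorem single_mem_coeffGrading {g : G} {r : R} (hr : r ∈ 𝒜 i) :
    single g r ∈ coeffGrading 𝒜 i := by
  classical
  intro g'
  rw [coeff_single, Finsupp.single_apply]
  split_ifs
  exacts [hr, zero_mem _]

instance [AddMonoid ι] [Monoid G] [SetLike.GradedMonoid 𝒜] :
    SetLike.GradedMonoid (coeffGrading 𝒜 (G := G)) where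
  one_mem := single_mem_coeffGrading SetLike.GradedOne.one_mem
  mul_mem i j x y hx hy g := by
    classical
    rw [coeff_mul]
    refine Submodule.finsuppSum_mem _ _ _ _ fun a _ =>
      Submodule.finsuppSum_mem _ _ _ _ fun b _ => ?_
    split_ifs
    exacts [SetLike.GradedMul.mul_mem (hx a) (hy b), zero_mem _]

end CoeffGrading

theorem twist_mem_coeffGrading {ι k R G : Type*} [CommSemiring k] [CommSemiring R] [Algebra k R]
    [CommMonoid G] {𝒜 : ι → Submodule k R} {i : ι} (ψ : G →* kˣ) {x : MonoidAlgebra R G}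
    (hx : x ∈ coeffGrading 𝒜 i) :
    twist ψ x ∈ coeffGrading 𝒜 i := fun g => by
  rw [coeff_twist, Units.smul_def]
  exact Submodule.smul_mem _ _ (hx g)

theorem eq_sum_single_of_coeff_eq_zero {R G S : Type*} [Semiring R] [Fintype G] [SetLike S G]
    {s : S} [Fintype s] {x : MonoidAlgebra R G} (hx : ∀ g ∉ s, x.coeff g = 0) :
    x = ∑ g : s, single (g : G) (x.coeff g) := by
  classical
  calc x = ∑ g ∈ (s : Set G).toFinset, single g (x.coeff g) := by
        refine (sum_coeff_single x).symm.trans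
          (Finsupp.sum_of_support_subset _ (fun g hg => ?_) _ fun _ _ => by simp)
        by_contra hgs
        exact Finsupp.mem_support_iff.mp hg (hx g (by simpa using hgs))
    _ = ∑ g : s, single (g : G) (x.coeff g) := Finset.sum_subtype _ (by simp) _

section GenericElement

variable (k G : Type*) [CommSemiring k] [Fintype G]

noncomputable def genericElement : MonoidAlgebra (MvPolynomial G k) G :=
  ∑ g, single g (X g)

theorem genericElement_mem_coeffGrading :
    genericElement k G ∈ coeffGrading (homogeneousSubmodule G k) 1 :=
  Submodule.sum_mem _ fun g _ => single_mem_coeffGrading (isHomogeneous_X k g)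

variable {k G} [CommMonoid G]

theorem twist_genericElement (ψ : G →* kˣ) :
    twist ψ (genericElement k G) = ∑ g, single g ((ψ g : k) • X g) := by
  simp [genericElement, Units.smul_def]

end GenericElement

end MonoidAlgebra

namespace QuotientGroup

variable {G M : Type*}

def trivialOnEquivHom [Group G] (H : Subgroup G) [H.Normal] [Monoid M] :
    {χ : G →* M // ∀ h ∈ H, χ h = 1} ≃ (G ⧸ H →* M) where
  toFun χ := lift H χ.1 χ.2
  invFun φ := ⟨φ.comp (mk' H), fun h hh => by simp [(eq_one_iff h).mpr hh]⟩
  left_inv _ := rfl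
  right_inv _ := monoidHom_ext H rfl

variable [CommGroup G] [Finite G] (M) [CommMonoid M] (H : Subgroup G)
  [HasEnoughRootsOfUnity M (Monoid.exponent (G ⧸ H))]

theorem card_trivialOn_eq_index :
    Nat.card {χ : G →* Mˣ // ∀ h ∈ H, χ h = 1} = H.index := by
  obtain ⟨e⟩ := CommGroup.monoidHom_mulEquiv_of_hasEnoughRootsOfUnity (G ⧸ H) M
  rw [Subgroup.index, Nat.card_congr ((trivialOnEquivHom H).trans e.toEquiv)]

theorem exists_trivialOn_apply_ne_one {g : G} (hg : g ∉ H) :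
    ∃ χ : G →* Mˣ, (∀ h ∈ H, χ h = 1) ∧ χ g ≠ 1 := by
  obtain ⟨φ, hφ⟩ := CommGroup.exists_apply_ne_one_of_hasEnoughRootsOfUnity (G ⧸ H) M
    (a := g) (by rwa [Ne, eq_one_iff])
  exact ⟨_, ((trivialOnEquivHom H).symm φ).2, hφ⟩

end QuotientGroup

def MonoidHom.mulLeftTrivialOn {G M : Type*} [Group G] [CommGroup M] {H : Subgroup G}
    (ψ : G →* M) (hψ : ∀ h ∈ H, ψ h = 1) :
    {χ : G →* M // ∀ h ∈ H, χ h = 1} ≃ {χ : G →* M // ∀ h ∈ H, χ h = 1} :=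
  (Equiv.mulLeft ψ).subtypeEquiv fun χ => by simp +contextual [hψ]

open MonoidAlgebra

/-- The product over the characters of `G` trivial on `H` of the elements
`∑ g, χ(g) x_g g` of the group algebra `ℂ[x_g][G]` is supported on `H`, with
coefficients homogeneous of degree `[G : H]`. -/
theorem prod_characters_trivial_on_H_supported (G : Type*) [CommGroup G] [Fintype G]
    (H : Subgroup G) [Fintype {χ : G →* ℂˣ // ∀ h ∈ H, χ h = 1}] [Fintype H] :
    ∃ A : H → MvPolynomial G ℂ,
      (∀ h : H, (A h).IsHomogeneous H.index) ∧
      (∏ χ : {χ : G →* ℂˣ // ∀ h ∈ H, χ h = 1},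
          ∑ g : G, MonoidAlgebra.single g ((χ.1 g : ℂ) • (MvPolynomial.X g : MvPolynomial G ℂ)))
        = ∑ h : H, MonoidAlgebra.single (h : G) (A h) := by
  simp only [← twist_genericElement]
  set P := ∏ χ : {χ : G →* ℂˣ // ∀ h ∈ H, χ h = 1}, twist χ.1 (genericElement ℂ G)
  have homogeneous : P ∈ coeffGrading (homogeneousSubmodule G ℂ) H.index := by
    have index_eq : H.index = ∑ _χ : {χ : G →* ℂˣ // ∀ h ∈ H, χ h = 1}, 1 := by
      simp [← QuotientGroup.card_trivialOn_eq_index ℂ H, Nat.card_eq_fintype_card]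
    rw [index_eq]
    exact SetLike.prod_mem_graded _ _ _ fun χ _ =>
      twist_mem_coeffGrading χ.1 (genericElement_mem_coeffGrading ℂ G)
  have vanishing g (hg : g ∉ H) : P.coeff g = 0 := by
    obtain ⟨ψ, hψ, hψg⟩ := QuotientGroup.exists_trivialOn_apply_ne_one ℂ H hg
    refine coeff_eq_zero_of_twist_eq (ψ := ψ) ?_ hψg
    simp only [P, map_prod, twist_twist]
    exact Fintype.prod_equiv (MonoidHom.mulLeftTrivialOn ψ hψ) _ _ fun χ => rfl
  exact ⟨fun h => P.coeff h, fun h => homogeneous h, eq_sum_single_of_coeff_eq_zero vanishing⟩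
end

section
/- Generalization of Dedekind's theorem: Let G be a finite abelian group and H a subgroup. Then there exist homogeneous polynomials A_h ∈ ℂ[x_g; g ∈ G] for h ∈ H, each of degree [G:H], such that the group determinant factors as Θ(G) = ∏_{χ ∈ Ĥ} ∑_{h ∈ H} χ(h) A_h. If H = G, one can take A_h = x_h, recovering Dedekind's theorem. -/
open Matrix MvPolynomial
open scoped Kronecker

/-!
Choosing coset representatives identifies `G` with `(G ⧸ H) × H` and turns the group matrix of `G`
into a `[G : H] × [G : H]` block matrix whose blocks are group matrices of `H`. The character table
of `H` diagonalises every group matrix of `H` at once, so `Θ(G) = ∏_χ det P_χ`, where `P_χ` is the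
`[G : H] × [G : H]` matrix of linear forms obtained by pairing each block with `χ`; in particular
`det P_χ` is homogeneous of degree `[G : H]`. Fourier inversion on `H` then produces `A_h` with
`∑_h χ(h) A_h = det P_χ`. When `H = G` there is a single block, `det P_χ = ∑_h χ(h) x_h`, and
Fourier inversion returns `A_h = x_h`.
-/

theorem MvPolynomial.IsHomogeneous.det {σ R n : Type*} [CommRing R] [Fintype n] [DecidableEq n]
    {M : Matrix n n (MvPolynomial σ R)} {d : ℕ} (hM : ∀ i j, (M i j).IsHomogeneous d) :
    M.det.IsHomogeneous (Fintype.card n * d) := by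
  rw [Matrix.det_apply]
  refine IsHomogeneous.sum _ _ _ fun τ _ => ?_
  have hprod := IsHomogeneous.prod Finset.univ (fun i => M (τ i) i) (fun _ => d) fun i _ => hM _ _
  rw [Finset.sum_const, Finset.card_univ, smul_eq_mul] at hprod
  rw [← mem_homogeneousSubmodule] at hprod ⊢
  exact Submodule.smul_of_tower_mem _ _ hprod

section Characters

variable {Γ : Type*} [CommGroup Γ] [Fintype Γ]

theorem sum_apply_eq_zero_of_ne_one {χ : Γ →* ℂˣ} (hχ : χ ≠ 1) : ∑ a, (χ a : ℂ) = 0 :=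
  sum_hom_units_eq_zero ((Units.coeHom ℂ).comp χ) fun h =>
    hχ <| MonoidHom.ext fun a => Units.ext <| DFunLike.congr_fun h a

theorem sum_dual_apply_eq_zero_of_ne_one [Fintype (Γ →* ℂˣ)] {a : Γ} (ha : a ≠ 1) :
    ∑ χ : Γ →* ℂˣ, (χ a : ℂ) = 0 := by
  obtain ⟨ψ, hψ⟩ := CommGroup.exists_apply_ne_one_of_hasEnoughRootsOfUnity Γ ℂ ha
  exact sum_hom_units_eq_zero ((Units.coeHom ℂ).comp (MonoidHom.eval a)) fun h =>
    hψ <| Units.ext <| DFunLike.congr_fun h ψ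

theorem card_dual_eq_card [Fintype (Γ →* ℂˣ)] : Fintype.card (Γ →* ℂˣ) = Fintype.card Γ := by
  simpa only [Nat.card_eq_fintype_card] using
    CommGroup.card_monoidHom_of_hasEnoughRootsOfUnity Γ ℂ

variable (Γ)

noncomputable def charMatrix : Matrix (Γ →* ℂˣ) Γ ℂ := of fun χ a => χ a

noncomputable def invCharMatrix : Matrix Γ (Γ →* ℂˣ) ℂ :=
  of fun a χ => (Fintype.card Γ : ℂ)⁻¹ * ((χ a)⁻¹ : ℂˣ)

theorem charMatrix_mul_invCharMatrix [DecidableEq (Γ →* ℂˣ)] :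
    charMatrix Γ * invCharMatrix Γ = 1 := by
  ext χ ψ
  have hcard : (Fintype.card Γ : ℂ) ≠ 0 := Nat.cast_ne_zero.mpr Fintype.card_ne_zero
  have hsum : ∑ a, (χ a : ℂ) * ((ψ a)⁻¹ : ℂˣ) = ∑ a, ((χ * ψ⁻¹) a : ℂ) := by simp
  simp only [mul_apply, charMatrix, invCharMatrix, of_apply,
    mul_left_comm _ (Fintype.card Γ : ℂ)⁻¹, ← Finset.mul_sum, hsum]
  rcases eq_or_ne χ ψ with rfl | hne
  · simp [hcard]
  · rw [sum_apply_eq_zero_of_ne_one (mul_inv_eq_one.not.mpr hne), mul_zero, one_apply_ne hne]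

theorem invCharMatrix_mul_charMatrix [Fintype (Γ →* ℂˣ)] [DecidableEq Γ] :
    invCharMatrix Γ * charMatrix Γ = 1 := by
  ext a b
  have hcard : (Fintype.card Γ : ℂ) ≠ 0 := Nat.cast_ne_zero.mpr Fintype.card_ne_zero
  have hsum : ∑ χ : Γ →* ℂˣ, ((χ a)⁻¹ : ℂˣ) * (χ b : ℂ) =
      ∑ χ : Γ →* ℂˣ, (χ (a⁻¹ * b) : ℂ) := by simp [mul_comm]
  simp only [mul_apply, charMatrix, invCharMatrix, of_apply, mul_assoc, ← Finset.mul_sum, hsum]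
  rcases eq_or_ne a b with rfl | hne
  · simp [card_dual_eq_card, hcard]
  · rw [sum_dual_apply_eq_zero_of_ne_one (inv_mul_eq_one.not.mpr hne), mul_zero, one_apply_ne hne]

end Characters

section Fourier

variable {Γ M : Type*} [CommGroup Γ] [Fintype Γ] [Fintype (Γ →* ℂˣ)] [AddCommGroup M] [Module ℂ M]

noncomputable def invFourier (P : (Γ →* ℂˣ) → M) (a : Γ) : M :=
  ∑ χ, invCharMatrix Γ a χ • P χ

theorem sum_smul_invFourier [DecidableEq (Γ →* ℂˣ)] (P : (Γ →* ℂˣ) → M) (χ : Γ →* ℂˣ) :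
    ∑ a, (χ a : ℂ) • invFourier P a = P χ := by
  have h := congrFun (congrFun (charMatrix_mul_invCharMatrix Γ) χ)
  simp only [mul_apply, charMatrix, of_apply] at h
  simp only [invFourier, Finset.smul_sum, smul_smul]
  rw [Finset.sum_comm]
  simp only [← Finset.sum_smul, h, one_apply, ite_smul, one_smul, zero_smul,
    Finset.sum_ite_eq, Finset.mem_univ, if_true]

theorem invFourier_sum_smul [DecidableEq Γ] (x : Γ → M) :
    invFourier (fun χ => ∑ a, (χ a : ℂ) • x a) = x := by
  funext b
  have h := congrFun (congrFun (invCharMatrix_mul_charMatrix Γ) b)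
  simp only [mul_apply, charMatrix, of_apply] at h
  simp only [invFourier, Finset.smul_sum, smul_smul]
  rw [Finset.sum_comm]
  simp only [← Finset.sum_smul, h, one_apply, ite_smul, one_smul, zero_smul,
    Finset.sum_ite_eq, Finset.mem_univ, if_true]

end Fourier

section BlockGroupMatrix

variable {Γ ι R : Type*} [CommGroup Γ] [Fintype Γ] [CommRing R] [Algebra ℂ R]

def blockGroupMatrix (F : ι → ι → Γ → R) : Matrix (ι × Γ) (ι × Γ) R :=
  of fun p q => F p.1 q.1 (p.2 * q.2⁻¹)

noncomputable def fourierBlock (F : ι → ι → Γ → R) (χ : Γ →* ℂˣ) : Matrix ι ι R :=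
  of fun i j => ∑ a, (χ a : ℂ) • F i j a

variable [Fintype ι] [DecidableEq ι] [Fintype (Γ →* ℂˣ)] [DecidableEq (Γ →* ℂˣ)]

theorem blockGroupMatrix_mul_kronecker_invCharMatrix (F : ι → ι → Γ → R) :
    blockGroupMatrix F * ((1 : Matrix ι ι R) ⊗ₖ (invCharMatrix Γ).map (algebraMap ℂ R)) =
      ((1 : Matrix ι ι R) ⊗ₖ (invCharMatrix Γ).map (algebraMap ℂ R)) *
        blockDiagonal (fourierBlock F) := by
  ext ⟨i, a⟩ ⟨j, χ⟩
  simp only [mul_apply, Fintype.sum_prod_type, blockGroupMatrix, kroneckerMap_apply, one_apply,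
    map_apply, blockDiagonal_apply, fourierBlock, of_apply, ite_mul, zero_mul, one_mul, mul_ite,
    mul_zero, Finset.sum_ite_eq, Finset.sum_ite_eq', Finset.mem_univ, if_true]
  rw [Finset.sum_comm, Finset.mul_sum, ← (Equiv.divLeft a).sum_comp]
  refine Finset.sum_congr rfl fun b _ => ?_
  have hb : a * (a / b)⁻¹ = b := by rw [inv_div, mul_div_cancel]
  have hχ : ((χ (a / b))⁻¹ : ℂˣ) = (χ a)⁻¹ * χ b := by rw [map_div, inv_div, div_eq_inv_mul]
  simp only [Finset.sum_ite_eq', Finset.mem_univ, if_true, Equiv.divLeft_apply, hb, invCharMatrix,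
    of_apply, hχ, Units.val_mul, Algebra.smul_def, map_mul]
  ring

theorem det_blockGroupMatrix [DecidableEq Γ] (F : ι → ι → Γ → R) :
    (blockGroupMatrix F).det = ∏ χ, (fourierBlock F χ).det := by
  have hUV : ((1 : Matrix ι ι R) ⊗ₖ (invCharMatrix Γ).map (algebraMap ℂ R)) *
      ((1 : Matrix ι ι R) ⊗ₖ (charMatrix Γ).map (algebraMap ℂ R)) = 1 := by
    rw [← mul_kronecker_mul, ← Matrix.map_mul, invCharMatrix_mul_charMatrix, Matrix.one_mul,
      Matrix.map_one _ (map_zero _) (map_one _), one_kronecker_one]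
  have hVU : ((1 : Matrix ι ι R) ⊗ₖ (charMatrix Γ).map (algebraMap ℂ R)) *
      ((1 : Matrix ι ι R) ⊗ₖ (invCharMatrix Γ).map (algebraMap ℂ R)) = 1 := by
    rw [← mul_kronecker_mul, ← Matrix.map_mul, charMatrix_mul_invCharMatrix, Matrix.one_mul,
      Matrix.map_one _ (map_zero _) (map_one _), one_kronecker_one]
  rw [← det_blockDiagonal, ← det_conj_of_mul_eq_one hUV hVU,
    ← blockGroupMatrix_mul_kronecker_invCharMatrix F, Matrix.mul_assoc, hUV, Matrix.mul_one]

end BlockGroupMatrix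

section Transversal

variable {G : Type*} [Group G] (H : Subgroup G)

noncomputable def quotientProdSubgroupEquiv : (G ⧸ H) × H ≃ G where
  toFun p := p.1.out * p.2
  invFun g :=
    ((g : G ⧸ H), ⟨(g : G ⧸ H).out⁻¹ * g, QuotientGroup.eq.mp (QuotientGroup.out_eq' _)⟩)
  left_inv := fun ⟨q, h⟩ => by
    have hq : ((q.out * h : G) : G ⧸ H) = q := by
      rw [QuotientGroup.mk_mul_of_mem _ h.2, QuotientGroup.out_eq']
    ext <;> simp [hq]
  right_inv g := mul_inv_cancel_left _ _

theorem det_groupMatrix_eq_det_blockGroupMatrix {G : Type*} [CommGroup G] [Fintype G]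
    [DecidableEq G] (H : Subgroup G) [Fintype H] [Fintype (G ⧸ H)] [DecidableEq (G ⧸ H)]
    {R : Type*} [CommRing R] (f : G → R) :
    (of fun g g' : G => f (g * g'⁻¹)).det =
      (blockGroupMatrix fun (i j : G ⧸ H) (u : H) => f (i.out * u * j.out⁻¹)).det := by
  rw [← det_submatrix_equiv_self (quotientProdSubgroupEquiv H)]
  congr 1
  ext ⟨i, a⟩ ⟨j, b⟩
  simp only [submatrix_apply, of_apply, blockGroupMatrix, quotientProdSubgroupEquiv,
    Equiv.coe_fn_mk]
  congr 1
  push_cast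
  group

end Transversal

/-- Generalization of Dedekind's theorem: for a finite abelian group `G` and subgroup `H`,
there are homogeneous polynomials `A_h` of degree `[G : H]` with
`Θ(G) = ∏_{χ ∈ Ĥ} ∑_{h ∈ H} χ(h) A_h`; if `H = G` one can take `A_h = x_h`. -/
theorem dedekind_generalization (G : Type*) [CommGroup G] [Fintype G] [DecidableEq G]
    (H : Subgroup G) [Fintype (H →* ℂˣ)] [Fintype H] :
    ∃ A : H → MvPolynomial G ℂ,
      (∀ h : H, (A h).IsHomogeneous H.index) ∧
      (Matrix.det (Matrix.of fun g h : G => (MvPolynomial.X (g * h⁻¹) : MvPolynomial G ℂ))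
        = ∏ χ : H →* ℂˣ, ∑ h : H, (χ h : ℂ) • A h) ∧
      (H = ⊤ → ∀ h : H, A h = MvPolynomial.X (h : G)) := by
  classical
  let F : G ⧸ H → G ⧸ H → H → MvPolynomial G ℂ := fun i j u => X (i.out * u * j.out⁻¹)
  refine ⟨invFourier fun χ => (fourierBlock F χ).det, fun h => ?_, ?_, fun hH => ?_⟩
  · have hdet (χ : H →* ℂˣ) : (fourierBlock F χ).det.IsHomogeneous (Fintype.card (G ⧸ H) * 1) :=
      IsHomogeneous.det fun i j => IsHomogeneous.sum _ _ _ fun u _ =>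
        Submodule.smul_mem (homogeneousSubmodule G ℂ 1) _ (isHomogeneous_X ℂ _)
    rw [mul_one, ← Nat.card_eq_fintype_card, ← H.index_eq_card] at hdet
    rw [← mem_homogeneousSubmodule]
    exact Submodule.sum_mem _ fun χ _ => Submodule.smul_mem _ _ (hdet χ)
  · simp only [sum_smul_invFourier]
    exact (det_groupMatrix_eq_det_blockGroupMatrix H _).trans (det_blockGroupMatrix F)
  · subst hH
    have := QuotientGroup.subsingleton_quotient_top (G := G)
    have : Unique (G ⧸ (⊤ : Subgroup G)) := uniqueOfSubsingleton 1
    have hP : (fun χ => (fourierBlock F χ).det) =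
        fun χ : (⊤ : Subgroup G) →* ℂˣ => ∑ u, (χ u : ℂ) • X (u : G) := by
      funext χ
      simp only [det_unique, fourierBlock, F, of_apply, mul_inv_cancel_comm]
    intro h
    rw [hP, invFourier_sum_smul]
end

section
/- Inverse formula in the group algebra: Let G be a finite abelian group and x_g ∈ ℂ for g ∈ G with Θ(G) = det(x_{gh^{-1}})_{g,h} ≠ 0. Then the element ∑_{g ∈ G} x_g g of ℂ[G] is invertible with inverse (1/Θ(G)) · ∏_{χ ∈ Ĝ, χ ≠ χ_1} (∑_{g ∈ G} χ(g) x_g g), where χ_1 is the trivial character. -/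
/-! Evaluation at a character `ψ` is an algebra homomorphism `ℂ[G] → ℂ`, and these evaluations
separate the elements of `ℂ[G]` because the characters form a basis of `G → ℂ`. The element
`∑ χ(g) x_g g` evaluates at `ψ` to `∑ (ψχ)(g) x_g`, so the product of these elements over all `χ`
evaluates at every `ψ` to `∏_χ ∑ χ(g) x_g`. This is `Θ(G)` by Dedekind's factorization of the group
determinant: the characters are eigenvectors of the transposed group matrix. Hence
`∏_χ ∑ χ(g) x_g g = Θ(G) · 1`, and the factor for `χ = χ₁` is `∑ x_g g`. -/

open Matrix

def AddChar.equivMonoidHomUnits {G M : Type*} [Group G] [CommMonoid M] :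
    AddChar (Additive G) M ≃ (G →* Mˣ) :=
  AddChar.toMonoidHomEquiv.trans MonoidHom.toHomUnitsMulEquiv.toEquiv

theorem LinearMap.det_eq_prod_of_apply_basis_eq_smul {R M ι : Type*} [CommRing R]
    [AddCommGroup M] [Module R M] [Fintype ι] [DecidableEq ι] (b : Module.Basis ι R M)
    (f : M →ₗ[R] M) (μ : ι → R) (hf : ∀ i, f (b i) = μ i • b i) :
    LinearMap.det f = ∏ i, μ i := by
  have hdiag : LinearMap.toMatrix b b f = diagonal μ := by
    ext i j
    rw [LinearMap.toMatrix_apply, hf, map_smul, b.repr_self, diagonal_apply]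
    by_cases hij : i = j <;> simp [hij]
  rw [← LinearMap.det_toMatrix b, hdiag, det_diagonal]

namespace GroupDeterminant

variable {G : Type*} [CommGroup G] [Fintype G]

noncomputable instance : Fintype (G →* ℂˣ) := .ofEquiv _ AddChar.equivMonoidHomUnits

variable (G) in
noncomputable def charBasis : Module.Basis (G →* ℂˣ) ℂ (G → ℂ) :=
  ((AddChar.complexBasis (Additive G)).map (LinearEquiv.funCongrLeft ℂ ℂ Additive.ofMul)).reindex
    AddChar.equivMonoidHomUnits

lemma charBasis_apply (χ : G →* ℂˣ) : charBasis G χ = fun g => (χ g : ℂ) := by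
  ext g
  simp only [charBasis, Module.Basis.reindex_apply, Module.Basis.map_apply,
    AddChar.complexBasis_apply, LinearEquiv.funCongrLeft_apply]
  rfl

def groupMatrix {R : Type*} (x : G → R) : Matrix G G R := Matrix.of fun g h => x (g * h⁻¹)

lemma vecMul_groupMatrix_char (x : G → ℂ) (χ : G →* ℂˣ) :
    (fun g => (χ g : ℂ)) ᵥ* groupMatrix x = (∑ g, (χ g : ℂ) * x g) • fun g => (χ g : ℂ) := by
  ext h
  simp only [vecMul, dotProduct, groupMatrix, of_apply, Pi.smul_apply, smul_eq_mul, Finset.sum_mul]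
  refine Fintype.sum_equiv (Equiv.mulRight h⁻¹) _ _ fun k => ?_
  simp only [Equiv.coe_mulRight, map_mul, map_inv, Units.val_mul, Units.val_inv_eq_inv_val]
  field_simp

theorem det_groupMatrix [DecidableEq G] (x : G → ℂ) :
    (groupMatrix x).det = ∏ χ : G →* ℂˣ, ∑ g, (χ g : ℂ) * x g := by
  rw [← det_transpose, ← LinearMap.det_toLin']
  refine LinearMap.det_eq_prod_of_apply_basis_eq_smul (charBasis G) _ _ fun χ => ?_
  rw [toLin'_apply, mulVec_transpose, charBasis_apply, vecMul_groupMatrix_char]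

noncomputable def evalChar (ψ : G →* ℂˣ) : MonoidAlgebra ℂ G →ₐ[ℂ] ℂ :=
  MonoidAlgebra.lift ℂ ℂ G ((Units.coeHom ℂ).comp ψ)

lemma evalChar_apply (ψ : G →* ℂˣ) (u : MonoidAlgebra ℂ G) :
    evalChar ψ u = ∑ g, u.coeff g * ψ g := by
  rw [evalChar, MonoidAlgebra.lift_apply, Finsupp.sum_fintype _ _ (by simp)]
  rfl

lemma evalChar_sum_single (ψ : G →* ℂˣ) (f : G → ℂ) :
    evalChar ψ (∑ g, MonoidAlgebra.single g (f g)) = ∑ g, f g * ψ g := by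
  simp [evalChar, MonoidAlgebra.lift_single]

lemma eq_of_evalChar_eq {u v : MonoidAlgebra ℂ G} (h : ∀ ψ, evalChar ψ u = evalChar ψ v) :
    u = v := by
  classical
  set a : G → ℂ := fun g => u.coeff g - v.coeff g
  have ha_char : ∀ ψ, a ⬝ᵥ charBasis G ψ = 0 := fun ψ => by
    simp only [a, dotProduct, charBasis_apply, sub_mul, Finset.sum_sub_distrib, ← evalChar_apply,
      h, sub_self]
  have ha : ∀ f, a ⬝ᵥ f = 0 := fun f => by
    rw [← (charBasis G).sum_repr f, dotProduct_sum]
    simp [dotProduct_smul, ha_char]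
  ext g
  simpa [a, sub_eq_zero] using ha (Pi.single g 1)

theorem prod_sum_single_char_mul [DecidableEq G] (x : G → ℂ) :
    ∏ χ : G →* ℂˣ, ∑ g, MonoidAlgebra.single g ((χ g : ℂ) * x g) =
      (groupMatrix x).det • (1 : MonoidAlgebra ℂ G) := by
  refine eq_of_evalChar_eq fun ψ => ?_
  rw [map_prod, map_smul, map_one, smul_eq_mul, mul_one, det_groupMatrix]
  simp_rw [evalChar_sum_single]
  refine Fintype.prod_equiv (Equiv.mulLeft ψ) _ _ fun χ => Finset.sum_congr rfl fun g _ => ?_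
  simp only [Equiv.coe_mulLeft, MonoidHom.mul_apply, Units.val_mul]
  ring

end GroupDeterminant

/-- Inverse formula: if the group determinant of `(x_g) ∈ ℂ^G` is nonzero, then
`∑ x_g g` is invertible in `ℂ[G]` with inverse
`Θ(G)⁻¹ ∏_{χ ≠ χ₁} ∑ χ(g) x_g g`. -/
theorem group_algebra_inverse_formula (G : Type*) [CommGroup G] [Fintype G] [DecidableEq G]
    [Fintype {χ : G →* ℂˣ // χ ≠ 1}] (x : G → ℂ)
    (hΘ : Matrix.det (Matrix.of fun g h : G => x (g * h⁻¹)) ≠ 0) :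
    (∑ g : G, MonoidAlgebra.single g (x g)) *
      ((Matrix.det (Matrix.of fun g h : G => x (g * h⁻¹)))⁻¹ •
        ∏ χ : {χ : G →* ℂˣ // χ ≠ 1},
          ∑ g : G, MonoidAlgebra.single g ((χ.1 g : ℂ) * x g)) = 1 := by
  classical
  have hsplit := GroupDeterminant.prod_sum_single_char_mul x
  rw [Fintype.prod_eq_mul_prod_subtype_ne _ 1] at hsplit
  simp only [MonoidHom.one_apply, Units.val_one, one_mul] at hsplit
  set Θ := (GroupDeterminant.groupMatrix x).det
  calc _ = Θ⁻¹ • ((∑ g : G, MonoidAlgebra.single g (x g)) *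
        ∏ χ : {χ : G →* ℂˣ // χ ≠ 1}, ∑ g : G, MonoidAlgebra.single g ((χ.1 g : ℂ) * x g)) :=
        mul_smul_comm _ _ _
    -- `congr!` identifies the given `Fintype` instance on the subtype with the classical one
    _ = Θ⁻¹ • Θ • 1 := by rw [← hsplit]; congr!
    _ = 1 := by rw [smul_smul, inv_mul_cancel₀ (a := Θ) hΘ, one_smul]
end

section
/- Let G be a finite abelian group and H a subgroup with coset representatives χ_1, ..., χ_k (k = |H|) of Ĝ_H in Ĝ. Then ∏_{χ ∈ Ĝ} ∑_{g ∈ G} χ(g) x_g g = ∏_{i=1}^k T_{χ_i}( ∏_{χ ∈ Ĝ_H} ∑_{g ∈ G} χ(g) x_g g ) in ℂ[x_g][G], where T_χ(∑ A_g g) = ∑ χ(g) A_g g. -/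
/-!
Twisting by `χ` is the algebra endomorphism of `R[G]` induced by `g ↦ χ(g) g`, and it sends
`∑_g ψ(g) x_g g` to `∑_g (χψ)(g) x_g g`. Hence the right-hand side is the product over all
`χ_i ψ` with `ψ ∈ Ĝ_H`, and these run through `Ĝ` exactly once because the `χ_i` represent
the cosets of `Ĝ_H`.
-/

/-- The twist operator `T_χ` on the group algebra, multiplying the coefficient
of `g` by `χ g`. -/
noncomputable def twist {G : Type*} [Group G] [Fintype G] (χ : G →* ℂˣ)
    (α : MonoidAlgebra (MvPolynomial G ℂ) G) : MonoidAlgebra (MvPolynomial G ℂ) G :=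
  ∑ g : G, MonoidAlgebra.single g ((χ g : ℂ) • α.coeff g)

theorem Fintype.prod_eq_prod_prod_mul_of_bijective_mk {M ι β : Type*} [Group M] [Fintype M]
    [Fintype ι] [CommMonoid β] {K : Subgroup M} [Fintype {ψ // ψ ∈ K}] {χ : ι → M}
    (hχ : Function.Bijective fun i => (QuotientGroup.mk (χ i) : M ⧸ K)) (f : M → β) :
    ∏ m, f m = ∏ i, ∏ ψ : {ψ // ψ ∈ K}, f (χ i * ψ) := by
  have hbij : Function.Bijective fun p : ι × {ψ // ψ ∈ K} => χ p.1 * p.2 := by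
    refine ⟨fun ⟨i, ψ⟩ ⟨j, φ⟩ h => ?_, fun m => ?_⟩
    · have hij : i = j := hχ.injective <| by
        simpa only [QuotientGroup.mk_mul_of_mem _ ψ.2, QuotientGroup.mk_mul_of_mem _ φ.2]
          using congrArg (QuotientGroup.mk (s := K)) h
      subst hij
      exact congrArg (i, ·) (Subtype.ext (mul_left_cancel h))
    · obtain ⟨i, hi⟩ := hχ.surjective m
      exact ⟨(i, ⟨(χ i)⁻¹ * m, QuotientGroup.eq.mp hi⟩), mul_inv_cancel_left _ _⟩
  rw [← Fintype.prod_prod_type']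
  exact (Fintype.prod_bijective _ hbij _ _ fun _ => rfl).symm

section Twist

variable {G : Type*} [Group G] [Fintype G]

noncomputable def twistAlgHom (χ : G →* ℂˣ) :
    MonoidAlgebra (MvPolynomial G ℂ) G →ₐ[MvPolynomial G ℂ] MonoidAlgebra (MvPolynomial G ℂ) G :=
  MonoidAlgebra.lift _ _ G
    { toFun g := MonoidAlgebra.single g (MvPolynomial.C (χ g : ℂ))
      map_one' := by simp [MonoidAlgebra.one_def]
      map_mul' g h := by simp [MonoidAlgebra.single_mul_single] }

theorem twist_eq_twistAlgHom (χ : G →* ℂˣ) (α : MonoidAlgebra (MvPolynomial G ℂ) G) :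
    twist χ α = twistAlgHom χ α := by
  rw [twistAlgHom, MonoidAlgebra.lift_apply, Finsupp.sum_fintype _ _ (by simp)]
  refine Finset.sum_congr rfl fun g _ => ?_
  simp [MvPolynomial.smul_eq_C_mul, mul_comm]

theorem twist_single (χ : G →* ℂˣ) (g : G) (a : MvPolynomial G ℂ) :
    twist χ (MonoidAlgebra.single g a) = MonoidAlgebra.single g ((χ g : ℂ) • a) := by
  simp [twist_eq_twistAlgHom, twistAlgHom, MvPolynomial.smul_eq_C_mul, mul_comm]

noncomputable def charSum (ψ : G →* ℂˣ) : MonoidAlgebra (MvPolynomial G ℂ) G :=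
  ∑ g : G, MonoidAlgebra.single g ((ψ g : ℂ) • MvPolynomial.X g)

theorem twist_charSum (χ ψ : G →* ℂˣ) : twist χ (charSum ψ) = charSum (χ * ψ) := by
  rw [charSum, charSum, twist_eq_twistAlgHom, map_sum]
  simp only [← twist_eq_twistAlgHom, twist_single, smul_smul, MonoidHom.mul_apply, Units.val_mul]

end Twist

theorem twist_prod {G ι : Type*} [CommGroup G] [Fintype G] (χ : G →* ℂˣ) (s : Finset ι)
    (f : ι → MonoidAlgebra (MvPolynomial G ℂ) G) :
    twist χ (∏ i ∈ s, f i) = ∏ i ∈ s, twist χ (f i) := by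
  simp only [twist_eq_twistAlgHom, map_prod]

theorem prod_all_characters_eq_prod_twists_general (G : Type*) [CommGroup G] [Fintype G]
    [Fintype (G →* ℂˣ)]
    (K : Subgroup (G →* ℂˣ))
    [Fintype {ψ : G →* ℂˣ // ψ ∈ K}]
    (k : ℕ) (χ : Fin k → (G →* ℂˣ))
    (hχ : Function.Bijective fun i => (QuotientGroup.mk (χ i) : (G →* ℂˣ) ⧸ K)) :
    (∏ ψ : G →* ℂˣ,
        ∑ g : G, MonoidAlgebra.single g ((ψ g : ℂ) • (MvPolynomial.X g : MvPolynomial G ℂ)))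
      = ∏ i : Fin k, twist (χ i)
          (∏ ψ : {ψ : G →* ℂˣ // ψ ∈ K},
            ∑ g : G, MonoidAlgebra.single g ((ψ.1 g : ℂ) • (MvPolynomial.X g : MvPolynomial G ℂ))) := by
  change ∏ ψ, charSum ψ = ∏ i, twist (χ i) (∏ ψ : {ψ // ψ ∈ K}, charSum ψ.1)
  simp only [twist_prod, twist_charSum]
  exact Fintype.prod_eq_prod_prod_mul_of_bijective_mk hχ charSum

/-- Splitting the product over all characters of `G` along a coset decomposition of the
subgroup `Ĝ_H` of characters trivial on `H`, via the twist operators of the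
representatives. -/
theorem prod_all_characters_eq_prod_twists (G : Type*) [CommGroup G] [Fintype G]
    [Fintype (G →* ℂˣ)] (H : Subgroup G)
    (K : Subgroup (G →* ℂˣ)) (hK : ∀ χ, χ ∈ K ↔ ∀ h ∈ H, χ h = 1)
    [Fintype {ψ : G →* ℂˣ // ψ ∈ K}]
    (k : ℕ) (hk : k = Nat.card H) (χ : Fin k → (G →* ℂˣ))
    (hχ : Function.Bijective fun i => (QuotientGroup.mk (χ i) : (G →* ℂˣ) ⧸ K)) :
    (∏ ψ : G →* ℂˣ,
        ∑ g : G, MonoidAlgebra.single g ((ψ g : ℂ) • (MvPolynomial.X g : MvPolynomial G ℂ)))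
      = ∏ i : Fin k, twist (χ i)
          (∏ ψ : {ψ : G →* ℂˣ // ψ ∈ K},
            ∑ g : G, MonoidAlgebra.single g ((ψ.1 g : ℂ) • (MvPolynomial.X g : MvPolynomial G ℂ))) :=
  prod_all_characters_eq_prod_twists_general G K k χ hχ
end
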